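/- Let f ∈ C[x_0,...,x_n] be homogeneous of degree k and let F be the foliation of P^{n+1} defined by the 1-form ω = x_{n+1} df − k f dx_{n+1}, with Gauss map G_F : P^{n+1} ⇢ P^{n+1}, x ↦ (x_{n+1} f_{x_0} : ... : x_{n+1} f_{x_n} : −k f). Then the projection ρ(x_0:...:x_{n+1}) = (x_0:...:x_n) from the point (0:...:0:1) satisfies ρ ∘ G_F = (∇f) ∘ ρ as rational maps, and the topological degrees of G_F and the polar map ∇f coincide. -/

import Mathlib

open MvPolynomial
open scoped LinearAlgebra.Projectivization

/-- The gradient (polar map on the level of vectors) of `f`. -/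
noncomputable def polarMapVec {n : ℕ} (f : MvPolynomial (Fin (n+1)) ℂ)
    (v : Fin (n+1) → ℂ) : Fin (n+1) → ℂ :=
  fun i => eval v (pderiv i f)

/-- `f` has polar degree `d` : the fiber of the polar map
`ℙⁿ ⇢ ℙⁿ`, `x ↦ (∂f/∂x₀ : ⋯ : ∂f/∂xₙ)` over a generic point has exactly `d` points. -/
def HasPolarDegree {n : ℕ} (f : MvPolynomial (Fin (n+1)) ℂ) (d : ℕ) : Prop :=
  ∃ U : Set (Fin (n+1) → ℂ), Dense U ∧ ∀ y ∈ U, y ≠ 0 →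
    Nat.card {x : ℙ ℂ (Fin (n+1) → ℂ) | ∃ v : Fin (n+1) → ℂ, ∃ hv : v ≠ 0,
      Projectivization.mk ℂ v hv = x ∧ ∃ c : ℂ, c ≠ 0 ∧ polarMapVec f v = c • y} = d

/-- The zero locus in `ℙⁿ` of a homogeneous polynomial. -/
def projZeroLocus {n : ℕ} (f : MvPolynomial (Fin (n+1)) ℂ) :
    Set (ℙ ℂ (Fin (n+1) → ℂ)) :=
  {x | eval x.rep f = 0}

/-- A self-map of `ℂ^(m+1)` given in homogeneous coordinates has topological degree
`d`: the generic fiber of the induced rational self-map of `ℙᵐ` has `d` points. -/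
def HasTopDegree {m : ℕ} (g : (Fin (m+1) → ℂ) → (Fin (m+1) → ℂ)) (d : ℕ) : Prop :=
  ∃ U : Set (Fin (m+1) → ℂ), Dense U ∧ ∀ y ∈ U, y ≠ 0 →
    Nat.card {x : ℙ ℂ (Fin (m+1) → ℂ) | ∃ v : Fin (m+1) → ℂ, ∃ hv : v ≠ 0,
      Projectivization.mk ℂ v hv = x ∧ ∃ c : ℂ, c ≠ 0 ∧ g v = c • y} = d

/-- The Gauss map of the foliation of `ℙ^(n+1)` defined by
`ω = x_{n+1} df − k f dx_{n+1}`, in homogeneous coordinates: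
`x ↦ (x_{n+1} f_{x₀} : ⋯ : x_{n+1} f_{xₙ} : −k f)`. -/
noncomputable def gaussVec {n : ℕ} (k : ℕ) (f : MvPolynomial (Fin (n+1)) ℂ)
    (v : Fin (n+1+1) → ℂ) : Fin (n+1+1) → ℂ :=
  Fin.snoc (fun i => v (Fin.last (n+1)) * polarMapVec f (v ∘ Fin.castSucc) i)
    (-(k : ℂ) * eval (v ∘ Fin.castSucc) f)

/-!
On the first `n + 1` coordinates the Gauss map is `x_{n+1} • ∇f`, which gives `ρ ∘ G_F = ∇f ∘ ρ`.
For the degrees, take `[y : s]` with `s ≠ 0` such that the fibre of `∇f` over `[y]` avoids the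
hypersurface `f = 0`. A point of the fibre of `G_F` over `[y : s]` is then determined by its
image `[v]` under `ρ`: its last coordinate must be `-k f(v) / (s c)`, where `∇f(v) = c • y`; and
conversely this lifts every point of the fibre of `∇f` over `[y]`. So both fibres have the same
number of points. The excluded `[y]` lie on a proper hypersurface: for `k = 1` the map `∇f` is
constant, and for `k ≥ 2` the cone `∇f(V(f))` lies in the zero set of a relation among the `∂ᵢf`,
obtained from one among the `n + 2` polynomials `f, ∂₀f, …, ∂ₙf` in `n + 1` variables.
-/

theorem MvPolynomial.IsHomogeneous.eval_smul {σ R : Type*} [CommSemiring R]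
    {φ : MvPolynomial σ R} {m : ℕ} (hφ : φ.IsHomogeneous m) (c : R) (v : σ → R) :
    eval (c • v) φ = c ^ m * eval v φ := by
  rw [eval_eq, eval_eq, Finset.mul_sum]
  refine Finset.sum_congr rfl fun d hd => ?_
  simp only [Pi.smul_apply, smul_eq_mul, mul_pow, Finset.prod_mul_distrib,
    Finset.prod_pow_eq_pow_sum]
  have hdeg : ∑ i ∈ d.support, d i = m := by
    rw [← Finsupp.degree_apply, Finsupp.degree_eq_weight_one]
    exact hφ (mem_support_iff.mp hd)
  rw [hdeg]
  ring

theorem MvPolynomial.IsHomogeneous.eval_zero_eq_zero {σ R : Type*} [CommSemiring R]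
    {φ : MvPolynomial σ R} {m : ℕ} (hφ : φ.IsHomogeneous m) (hm : m ≠ 0) :
    eval 0 φ = 0 := by
  simpa [zero_pow hm] using hφ.eval_smul 0 0

theorem dense_setOf_eval_ne_zero {σ : Type*} [Fintype σ] {P : MvPolynomial σ ℂ} (hP : P ≠ 0) :
    Dense {y : σ → ℂ | eval y P ≠ 0} := by
  refine fun y => by_contra fun hy => hP ?_
  have hzero : (eval · P) =ᶠ[nhds y] 0 := by
    simpa [mem_closure_iff_frequently, Filter.EventuallyEq] using hy
  have hP0 : (eval · P) = 0 :=
    (AnalyticOnNhd.eval_mvPolynomial P).eq_of_eventuallyEq analyticOnNhd_const hzero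
  exact MvPolynomial.funext fun x => by simpa using congrFun hP0 x

theorem exists_ne_zero_aeval_eq_zero {K : Type*} [Field K] {p : ℕ}
    (g : Fin (p + 1) → MvPolynomial (Fin p) K) :
    ∃ Q : MvPolynomial (Fin (p + 1)) K, Q ≠ 0 ∧ aeval g Q = 0 := by
  have hdep : ¬ AlgebraicIndependent K g := fun hg => by
    simpa using hg.lift_cardinalMk_le_trdeg
  obtain ⟨Q, hQ, hQ0⟩ := not_forall₂.mp (mt algebraicIndependent_iff.mpr hdep)
  exact ⟨Q, hQ0, hQ⟩

theorem exists_ne_zero_eval_polarMapVec_eq_zero {n : ℕ} {f : MvPolynomial (Fin (n + 1)) ℂ}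
    (hf : f ≠ 0) : ∃ P : MvPolynomial (Fin (n + 1)) ℂ, P ≠ 0 ∧
      ∀ v, eval v f = 0 → eval (polarMapVec f v) P = 0 := by
  set g : Fin (n + 1 + 1) → MvPolynomial (Fin (n + 1)) ℂ := Fin.cons f fun i => pderiv i f
  obtain ⟨Q, hQ0, hQ⟩ := exists_ne_zero_aeval_eq_zero g
  obtain ⟨q, hQq, hq⟩ := (finSuccEquiv ℂ (n + 1) Q).exists_eq_pow_rootMultiplicity_mul_and_not_dvd
    ((finSuccEquiv ℂ (n + 1)).map_ne_zero_iff.mpr hQ0) 0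
  rw [map_zero, sub_zero] at hQq hq
  rw [Polynomial.X_dvd_iff] at hq
  -- divide `Q` by the largest power of `X₀` dividing it: then `Q₁(0, Y) ≠ 0`, and still
  -- `Q₁(f, ∇f) = 0` because `f ≠ 0`
  set Q₁ := (finSuccEquiv ℂ (n + 1)).symm q
  have hQ₁ : aeval g Q₁ = 0 := by
    have hQ_eq : Q = X 0 ^ _ * Q₁ := (finSuccEquiv ℂ (n + 1)).injective (by
      rw [hQq, map_mul, map_pow, finSuccEquiv_X_zero, AlgEquiv.apply_symm_apply])
    rw [hQ_eq, map_mul, map_pow, aeval_X] at hQ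
    exact (mul_eq_zero.mp hQ).resolve_left (pow_ne_zero _ hf)
  refine ⟨q.coeff 0, hq, fun v hv => ?_⟩
  have hpt : (Fin.cons (eval v f) (polarMapVec f v) : Fin (n + 1 + 1) → ℂ) =
      fun i => eval v (g i) := by
    ext i
    refine Fin.cases ?_ (fun i => ?_) i <;> rfl
  calc eval (polarMapVec f v) (q.coeff 0)
      = eval (Fin.cons (eval v f) (polarMapVec f v) : Fin (n + 1 + 1) → ℂ) Q₁ := by
        rw [eval_eq_eval_mv_eval', hv, AlgEquiv.apply_symm_apply,
          ← Polynomial.coeff_zero_eq_eval_zero, Polynomial.coeff_map]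
    _ = eval v (aeval g Q₁) := by
        rw [hpt, aeval_eq_bind₁]
        exact (eval₂Hom_bind₁ _ _ _ _).symm
    _ = 0 := by rw [hQ₁, map_zero]

theorem exists_ne_zero_eval_smul_eq_zero {K σ : Type*} [Field K] [Nontrivial σ] (a : σ → K) :
    ∃ P : MvPolynomial σ K, P ≠ 0 ∧ ∀ t : K, eval (t • a) P = 0 := by
  classical
  obtain ⟨i⟩ := (inferInstance : Nonempty σ)
  by_cases ha : a = 0
  · exact ⟨X i, X_ne_zero i, fun t => by simp [ha]⟩
  obtain ⟨j, hj⟩ := Function.ne_iff.mp ha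
  obtain ⟨l, hl⟩ := exists_ne j
  refine ⟨C (a j) * X l - C (a l) * X j, fun h0 => hj ?_, fun t => ?_⟩
  · simpa [Pi.single_apply, hl] using congrArg (eval (Pi.single l 1)) h0
  · simp only [map_sub, map_mul, eval_C, eval_X, Pi.smul_apply, smul_eq_mul]
    ring

section Polar

variable {n k : ℕ} {f : MvPolynomial (Fin (n + 1)) ℂ}

theorem polarMapVec_smul (hhom : f.IsHomogeneous k) (c : ℂ) (v : Fin (n + 1) → ℂ) :
    polarMapVec f (c • v) = c ^ (k - 1) • polarMapVec f v := by
  ext i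
  exact (hhom.pderiv (i := i)).eval_smul c v

theorem exists_ne_zero_eval_eq_zero_of_polarMapVec_eq_smul (hn : 1 ≤ n) (hk : 1 ≤ k)
    (hhom : f.IsHomogeneous k) : ∃ P : MvPolynomial (Fin (n + 1)) ℂ, P ≠ 0 ∧
      ∀ y v (c : ℂ), c ≠ 0 → polarMapVec f v = c • y → eval v f = 0 → eval y P = 0 := by
  by_cases hconst : k = 1 ∨ f = 0
  · -- `∇f` is constant, so every such `y` lies on the line through `∇f 0`
    have : Nontrivial (Fin (n + 1)) := Fin.nontrivial_iff_two_le.mpr (by omega)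
    obtain ⟨P, hP0, hP⟩ := exists_ne_zero_eval_smul_eq_zero (polarMapVec f 0)
    refine ⟨P, hP0, fun y v c hc hv _ => ?_⟩
    have hconst' : polarMapVec f v = polarMapVec f 0 := by
      rcases hconst with rfl | rfl
      · simpa using (polarMapVec_smul hhom 0 v).symm
      · ext i; simp [polarMapVec]
    simpa [← hconst', hv, smul_smul, inv_mul_cancel₀ hc] using hP c⁻¹
  · -- `∇f (t • v) = t ^ (k - 1) • ∇f v` with `k - 1 ≥ 1`, so `y` itself is in `∇f(V(f))`
    obtain ⟨hk1, hf⟩ := not_or.mp hconst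
    obtain ⟨P, hP0, hP⟩ := exists_ne_zero_eval_polarMapVec_eq_zero hf
    refine ⟨P, hP0, fun y v c hc hv hfv => ?_⟩
    obtain ⟨t, ht⟩ := IsAlgClosed.exists_pow_nat_eq c⁻¹ (n := k - 1) (by omega)
    have hpol : polarMapVec f (t • v) = y := by
      rw [polarMapVec_smul hhom, hv, ht, smul_smul, inv_mul_cancel₀ hc, one_smul]
    simpa [hpol] using hP (t • v) (by rw [hhom.eval_smul, hfv, mul_zero])

end Polar

/-- `HasTopDegree g d` says, by definition, that `Nat.card (projFiber g y) = d` for generic `y`. -/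
def projFiber {m : ℕ} (g : (Fin (m + 1) → ℂ) → (Fin (m + 1) → ℂ)) (y : Fin (m + 1) → ℂ) :
    Set (ℙ ℂ (Fin (m + 1) → ℂ)) :=
  {x | ∃ v : Fin (m + 1) → ℂ, ∃ hv : v ≠ 0,
    Projectivization.mk ℂ v hv = x ∧ ∃ c : ℂ, c ≠ 0 ∧ g v = c • y}

section GaussFiber

variable {n k : ℕ} {f : MvPolynomial (Fin (n + 1)) ℂ} {y : Fin (n + 1) → ℂ} {s : ℂ}
  {j : Fin (n + 1)}

theorem gaussVec_eq_smul_snoc_iff {w : Fin (n + 1 + 1) → ℂ} {c : ℂ} :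
    gaussVec k f w = c • (Fin.snoc y s : Fin (n + 1 + 1) → ℂ) ↔
      w (Fin.last (n + 1)) • polarMapVec f (w ∘ Fin.castSucc) = c • y ∧
        -(k : ℂ) * eval (w ∘ Fin.castSucc) f = c * s := by
  have hsnoc : c • (Fin.snoc y s : Fin (n + 1 + 1) → ℂ) = Fin.snoc (c • y) (c * s) := by
    ext i
    refine Fin.lastCases ?_ (fun i => ?_) i <;> simp
  rw [hsnoc, gaussVec, Fin.snoc_inj]
  rfl

/-- For `∇f(v) = c • y`, the last coordinate is `-k f(v) / (s c)`, the one that puts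
`[v : gaussLift v]` in the fibre of the Gauss map over `[y : s]`; the coordinate `j`, with
`y j ≠ 0`, serves to read off `c`. -/
noncomputable def gaussLift (k : ℕ) (f : MvPolynomial (Fin (n + 1)) ℂ) (y : Fin (n + 1) → ℂ)
    (s : ℂ) (j : Fin (n + 1)) (v : Fin (n + 1) → ℂ) : Fin (n + 1 + 1) → ℂ :=
  Fin.snoc v (-(k : ℂ) * eval v f * y j / (s * polarMapVec f v j))

@[simp]
theorem gaussLift_comp_castSucc (v : Fin (n + 1) → ℂ) :
    gaussLift k f y s j v ∘ Fin.castSucc = v := by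
  ext i
  simp [gaussLift]

theorem gaussLift_ne_zero {v : Fin (n + 1) → ℂ} (hv : v ≠ 0) : gaussLift k f y s j v ≠ 0 :=
  fun h => hv (by simpa using congrArg (· ∘ Fin.castSucc) h)

theorem gaussLift_smul (hhom : f.IsHomogeneous k) (hk : k ≠ 0) {t : ℂ} (ht : t ≠ 0)
    (v : Fin (n + 1) → ℂ) : gaussLift k f y s j (t • v) = t • gaussLift k f y s j v := by
  obtain ⟨k, rfl⟩ := Nat.exists_eq_add_one_of_ne_zero hk
  ext i
  refine Fin.lastCases ?_ (fun i => ?_) i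
  · simp only [gaussLift, Fin.snoc_last, Pi.smul_apply, smul_eq_mul, hhom.eval_smul,
      polarMapVec_smul hhom, Nat.add_sub_cancel, pow_succ]
    by_cases hv : polarMapVec f v j = 0
    · simp [hv]
    · field_simp
  · simp [gaussLift]

theorem exists_gaussVec_eq_smul_snoc_iff (hk : k ≠ 0) (hyj : y j ≠ 0) (hs : s ≠ 0)
    (havoid : ∀ v (c : ℂ), c ≠ 0 → polarMapVec f v = c • y → eval v f ≠ 0)
    (w : Fin (n + 1 + 1) → ℂ) :
    (∃ c : ℂ, c ≠ 0 ∧ gaussVec k f w = c • (Fin.snoc y s : Fin (n + 1 + 1) → ℂ)) ↔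
      (∃ c : ℂ, c ≠ 0 ∧ polarMapVec f (w ∘ Fin.castSucc) = c • y) ∧
        w = gaussLift k f y s j (w ∘ Fin.castSucc) := by
  have hlast : w = gaussLift k f y s j (w ∘ Fin.castSucc) ↔ w (Fin.last (n + 1)) =
      -(k : ℂ) * eval (w ∘ Fin.castSucc) f * y j / (s * polarMapVec f (w ∘ Fin.castSucc) j) := by
    refine ⟨fun h => by simpa [gaussLift] using congrFun h (Fin.last _), fun h => ?_⟩
    ext i
    refine Fin.lastCases ?_ (fun i => ?_) i <;> simp [gaussLift, h]
  simp_rw [gaussVec_eq_smul_snoc_iff, hlast]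
  generalize w ∘ Fin.castSucc = u
  generalize w (Fin.last (n + 1)) = t
  have hkC : (k : ℂ) ≠ 0 := Nat.cast_ne_zero.mpr hk
  constructor
  · rintro ⟨c, hc, hpol, hfu⟩
    have ht : t ≠ 0 := by
      rintro rfl
      simpa [hc, hyj] using (congrFun hpol j).symm
    have hpol' : polarMapVec f u = (c / t) • y := by
      rw [div_eq_inv_mul, ← smul_smul, ← hpol, smul_smul, inv_mul_cancel₀ ht, one_smul]
    refine ⟨⟨c / t, div_ne_zero hc ht, hpol'⟩, ?_⟩
    rw [hpol', hfu, Pi.smul_apply, smul_eq_mul]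
    field_simp
  · rintro ⟨⟨c, hc, hpol⟩, rfl⟩
    have hfu := havoid u c hc hpol
    refine ⟨-(k : ℂ) * eval u f / s, by simp [hkC, hfu, hs], ?_, by field_simp⟩
    rw [hpol, Pi.smul_apply, smul_eq_mul, smul_smul]
    congr 1
    field_simp

noncomputable def gaussLiftProj (k : ℕ) (f : MvPolynomial (Fin (n + 1)) ℂ)
    (y : Fin (n + 1) → ℂ) (s : ℂ) (j : Fin (n + 1)) (x : ℙ ℂ (Fin (n + 1) → ℂ)) :
    ℙ ℂ (Fin (n + 1 + 1) → ℂ) :=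
  Projectivization.mk ℂ (gaussLift k f y s j x.rep) (gaussLift_ne_zero x.rep_nonzero)

theorem gaussLiftProj_mk (hhom : f.IsHomogeneous k) (hk : k ≠ 0) {v : Fin (n + 1) → ℂ}
    (hv : v ≠ 0) : gaussLiftProj k f y s j (Projectivization.mk ℂ v hv) =
      Projectivization.mk ℂ (gaussLift k f y s j v) (gaussLift_ne_zero hv) := by
  obtain ⟨a, ha⟩ := Projectivization.exists_smul_eq_mk_rep ℂ v hv
  refine (Projectivization.mk_eq_mk_iff ℂ _ _ _ _).mpr ⟨a, ?_⟩
  rw [← ha, Units.smul_def, Units.smul_def, gaussLift_smul hhom hk a.ne_zero]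

theorem gaussLiftProj_injective : Function.Injective (gaussLiftProj k f y s j) := by
  intro x z hxz
  obtain ⟨a, ha⟩ := (Projectivization.mk_eq_mk_iff ℂ _ _ _ _).mp hxz
  rw [← Projectivization.mk_rep x, ← Projectivization.mk_rep z]
  refine (Projectivization.mk_eq_mk_iff ℂ _ _ _ _).mpr ⟨a, ?_⟩
  ext i
  simpa [gaussLift] using congrFun ha (Fin.castSucc i)

theorem projFiber_gaussVec_eq_image (hhom : f.IsHomogeneous k) (hk : k ≠ 0) (hyj : y j ≠ 0)
    (hs : s ≠ 0) (havoid : ∀ v (c : ℂ), c ≠ 0 → polarMapVec f v = c • y → eval v f ≠ 0) :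
    projFiber (gaussVec k f) (Fin.snoc y s) =
      gaussLiftProj k f y s j '' projFiber (polarMapVec f) y := by
  ext x
  constructor
  · rintro ⟨w, hw, rfl, hG⟩
    obtain ⟨⟨c, hc, hpol⟩, hwL⟩ := (exists_gaussVec_eq_smul_snoc_iff hk hyj hs havoid w).mp hG
    have hu : w ∘ Fin.castSucc ≠ 0 := fun hu =>
      havoid _ c hc hpol (by rw [hu, hhom.eval_zero_eq_zero hk])
    refine ⟨Projectivization.mk ℂ _ hu, ⟨_, hu, rfl, c, hc, hpol⟩, ?_⟩
    rw [gaussLiftProj_mk hhom hk]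
    exact (Projectivization.mk_eq_mk_iff' ℂ _ _ _ _).mpr ⟨1, by rw [one_smul, ← hwL]⟩
  · rintro ⟨_, ⟨v, hv, rfl, hpol⟩, rfl⟩
    rw [gaussLiftProj_mk hhom hk]
    refine ⟨_, gaussLift_ne_zero hv, rfl, ?_⟩
    exact (exists_gaussVec_eq_smul_snoc_iff hk hyj hs havoid _).mpr (by simpa using hpol)

theorem card_projFiber_gaussVec (hhom : f.IsHomogeneous k) (hk : k ≠ 0)
    {z : Fin (n + 1 + 1) → ℂ} (hz : z ∘ Fin.castSucc ≠ 0) (hs : z (Fin.last (n + 1)) ≠ 0)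
    (havoid : ∀ v (c : ℂ), c ≠ 0 → polarMapVec f v = c • (z ∘ Fin.castSucc) → eval v f ≠ 0) :
    Nat.card (projFiber (gaussVec k f) z) =
      Nat.card (projFiber (polarMapVec f) (z ∘ Fin.castSucc)) := by
  obtain ⟨j, hj⟩ := Function.ne_iff.mp hz
  have hzsnoc : z = Fin.snoc (z ∘ Fin.castSucc) (z (Fin.last (n + 1))) :=
    (Fin.snoc_init_self z).symm
  conv_lhs => rw [hzsnoc]
  rw [projFiber_gaussVec_eq_image hhom hk (j := j) hj hs havoid,
    Nat.card_image_of_injective gaussLiftProj_injective]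

end GaussFiber

theorem isOpenMap_comp_castSucc {α : Type*} [TopologicalSpace α] {n : ℕ} :
    IsOpenMap fun y : Fin (n + 1) → α => y ∘ Fin.castSucc :=
  IsOpenMap.of_sections fun y => ⟨fun u => Fin.snoc u (y (Fin.last n)),
    (continuous_id.finSnoc continuous_const).continuousAt, Fin.snoc_init_self y,
    fun _ => Fin.snoc_comp_castSucc⟩

theorem hasTopDegree_iff_of_card_projFiber_eq {m l : ℕ}
    {g : (Fin (m + 1) → ℂ) → (Fin (m + 1) → ℂ)} {h : (Fin (l + 1) → ℂ) → (Fin (l + 1) → ℂ)}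
    {π : (Fin (m + 1) → ℂ) → (Fin (l + 1) → ℂ)} (hπc : Continuous π) (hπo : IsOpenMap π)
    (hπs : Function.Surjective π) {O : Set (Fin (m + 1) → ℂ)} (hO : IsOpen O) (hOd : Dense O)
    (hOπ : ∀ y ∈ O, y ≠ 0 ∧ π y ≠ 0)
    (hcard : ∀ y ∈ O, Nat.card (projFiber g y) = Nat.card (projFiber h (π y))) (d : ℕ) :
    HasTopDegree g d ↔ HasTopDegree h d := by
  constructor
  · rintro ⟨U, hU, hUd⟩
    refine ⟨π '' (U ∩ O), hπs.denseRange.dense_image hπc (hU.inter_of_isOpen_right hOd hO), ?_⟩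
    rintro _ ⟨y, ⟨hyU, hyO⟩, rfl⟩ -
    exact (hcard y hyO).symm.trans (hUd y hyU (hOπ y hyO).1)
  · rintro ⟨U, hU, hUd⟩
    refine ⟨π ⁻¹' U ∩ O, (hU.preimage hπo).inter_of_isOpen_right hOd hO, ?_⟩
    rintro y ⟨hyU, hyO⟩ -
    exact (hcard y hyO).trans (hUd (π y) hyU (hOπ y hyO).2)

theorem exists_isOpen_dense_polarFiber_disjoint_zeroLocus {n k : ℕ} (hn : 1 ≤ n) (hk : 1 ≤ k)
    {f : MvPolynomial (Fin (n + 1)) ℂ} (hhom : f.IsHomogeneous k) :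
    ∃ O : Set (Fin (n + 1 + 1) → ℂ), IsOpen O ∧ Dense O ∧ ∀ z ∈ O,
      z ∘ Fin.castSucc ≠ 0 ∧ z (Fin.last (n + 1)) ≠ 0 ∧
      ∀ v (c : ℂ), c ≠ 0 → polarMapVec f v = c • (z ∘ Fin.castSucc) → eval v f ≠ 0 := by
  obtain ⟨P, hP0, hP⟩ := exists_ne_zero_eval_eq_zero_of_polarMapVec_eq_smul hn hk hhom
  set Q := rename Fin.castSucc (X 0 * P) * X (Fin.last (n + 1))
  have hQ0 : Q ≠ 0 := mul_ne_zero
    ((map_ne_zero_iff _ (rename_injective _ (Fin.castSucc_injective _))).mpr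
      (mul_ne_zero (X_ne_zero 0) hP0)) (X_ne_zero _)
  refine ⟨{z | eval z Q ≠ 0}, isOpen_ne.preimage (continuous_eval Q),
    dense_setOf_eval_ne_zero hQ0, fun z hz => ?_⟩
  simp only [Q, map_mul, eval_rename, eval_X, mul_ne_zero_iff] at hz
  obtain ⟨⟨hz0, hzP⟩, hzl⟩ := hz
  exact ⟨fun h => hz0 (congrFun h 0), hzl, fun v c hc hv hfv => hzP (hP _ v c hc hv hfv)⟩

/-- For `f` homogeneous of degree `k`, the projection
`ρ(x₀:⋯:x_{n+1}) = (x₀:⋯:xₙ)` from `(0:⋯:0:1)` satisfies `ρ ∘ G_F = (∇f) ∘ ρ` as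
rational maps (on the level of homogeneous coordinates, `ρ(G_F(v))` equals the scalar
`v_{n+1}` times `∇f(ρ(v))`), and the topological degrees of the Gauss map `G_F` and of
the polar map `∇f` coincide. -/
theorem gauss_map_vs_polar_map {n k : ℕ} (hn : 1 ≤ n) (hk : 1 ≤ k)
    (f : MvPolynomial (Fin (n+1)) ℂ) (hhom : f.IsHomogeneous k) :
    (∀ v : Fin (n+1+1) → ℂ,
      (gaussVec k f v) ∘ Fin.castSucc
        = v (Fin.last (n+1)) • polarMapVec f (v ∘ Fin.castSucc)) ∧
    (∀ d : ℕ, HasTopDegree (gaussVec k f) d ↔ HasPolarDegree f d) := by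
  refine ⟨fun v => ?_, fun d => ?_⟩
  · ext i
    simp [gaussVec]
  obtain ⟨O, hO, hOd, havoid⟩ := exists_isOpen_dense_polarFiber_disjoint_zeroLocus hn hk hhom
  exact hasTopDegree_iff_of_card_projFiber_eq (by fun_prop) isOpenMap_comp_castSucc
    (fun u => ⟨Fin.snoc u 0, Fin.snoc_comp_castSucc⟩) hO hOd
    (fun z hz => ⟨fun h => (havoid z hz).1 (by simp [h]), (havoid z hz).1⟩)
    (fun z hz => card_projFiber_gaussVec hhom (by omega) (havoid z hz).1 (havoid z hz).2.1
      (havoid z hz).2.2) d
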